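/- Let A, B be strings of lengths m and n, σ a character, K' the all scores matrix of σA and B, and Diff = K' − K. Assume every row of K□ contains at most one nonzero entry and every nonzero entry of K□ equals 1. Then for all 0 ≤ i ≤ j ≤ n, if Diff[i,j] = 1 then Diff[i,j'] = 1 for every j' with j ≤ j' ≤ n. -/

import Mathlib

variable {α : Type*}

/-- LCS of two lists: the maximum length of a common sublist. -/
noncomputable def LCS (X Y : List α) : ℕ :=
  sSup {k | ∃ Z : List α, Z.length = k ∧ Z.Sublist X ∧ Z.Sublist Y}

/-- `substr S i j` is S[i..j]: the characters of S at (1-based) positions i+1,…,j. -/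
def substr (S : List α) (i j : ℕ) : List α := (S.take j).drop i

/-- The density matrix D□ of a matrix D. -/
def density (D : ℕ → ℕ → ℤ) (i j : ℕ) : ℤ :=
  D i j + D (i - 1) (j - 1) - D (i - 1) j - D i (j - 1)

/-- The all scores matrix K of A and B: K[i,j] = LCS(B[i..j], A) if i ≤ j, else j - i. -/
noncomputable def Kmat (A B : List α) (i j : ℕ) : ℤ :=
  if i ≤ j then (LCS (substr B i j) A : ℤ) else (j : ℤ) - (i : ℤ)

/-- The all scores matrix P of A and B: P[i,j] = LCS(B[i..n], A[0..j]). -/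
noncomputable def Pmat (A B : List α) (i j : ℕ) : ℤ :=
  (LCS (substr B i B.length) (substr A 0 j) : ℤ)

/-- nextmatch(i,σ,B): minimum (1-based) position i' with i < i' ≤ |B| and B[i'] = σ; ⊤ (∞) if none. -/
noncomputable def nextmatch (i : ℕ) (σ : α) (B : List α) : ℕ∞ :=
  sInf {k : ℕ∞ | ∃ k' : ℕ, k = (k' : ℕ∞) ∧ i < k' ∧ k' ≤ B.length ∧ B[k' - 1]? = some σ}

/-- prevmatch(j,σ,B): maximum (1-based) position i' with 1 ≤ i' ≤ j and B[i'] = σ; ⊥ (−∞) if none. -/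
noncomputable def prevmatch (j : ℕ) (σ : α) (B : List α) : WithBot ℕ :=
  sSup {k : WithBot ℕ | ∃ k' : ℕ, k = (k' : WithBot ℕ) ∧ 1 ≤ k' ∧ k' ≤ j ∧ B[k' - 1]? = some σ}

/-!
An optimal common subsequence of `B[i..j]` and `σA` that is longer than `LCS(B[i..j], A)` must
use `σ`, matched at some position `p` of `B[i..j]`; its tail shows `K[p,j] = K[i,j]`. Since
`K□ ≥ 0`, the row difference `K[i,·] - K[p,·]` is antitone and `K` is antitone in its row
index, so `K[p,j'] = K[i,j']` for all `j' ≥ j`. Prepending the same match of `σ` to an optimal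
common subsequence of `B[p..j']` and `A` then gives `LCS(B[i..j'], σA) ≥ K[i,j'] + 1`, while
`LCS(X, σA) ≤ LCS(X, A) + 1` always.
-/

section LCS

lemma bddAbove_LCS (X Y : List α) :
    BddAbove {k | ∃ Z : List α, Z.length = k ∧ Z.Sublist X ∧ Z.Sublist Y} :=
  ⟨X.length, fun _ ⟨_, hZ, hX, _⟩ => hZ ▸ hX.length_le⟩

lemma length_le_LCS {X Y Z : List α} (hX : Z.Sublist X) (hY : Z.Sublist Y) :
    Z.length ≤ LCS X Y :=
  le_csSup (bddAbove_LCS X Y) ⟨Z, rfl, hX, hY⟩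

lemma exists_sublist_length_eq_LCS (X Y : List α) :
    ∃ Z : List α, Z.length = LCS X Y ∧ Z.Sublist X ∧ Z.Sublist Y :=
  Nat.sSup_mem (s := {k | ∃ Z : List α, Z.length = k ∧ Z.Sublist X ∧ Z.Sublist Y})
    ⟨0, [], rfl, List.nil_sublist _, List.nil_sublist _⟩ (bddAbove_LCS X Y)

lemma LCS_mono {X X' Y Y' : List α} (hX : X.Sublist X') (hY : Y.Sublist Y') :
    LCS X Y ≤ LCS X' Y' := by
  obtain ⟨Z, hZ, hZX, hZY⟩ := exists_sublist_length_eq_LCS X Y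
  exact hZ ▸ length_le_LCS (hZX.trans hX) (hZY.trans hY)

lemma LCS_cons_le (X A : List α) (σ : α) : LCS X (σ :: A) ≤ LCS X A + 1 := by
  obtain ⟨Z, hZ, hZX, hZA⟩ := exists_sublist_length_eq_LCS X (σ :: A)
  rcases List.sublist_cons_iff.mp hZA with hZA | ⟨Z', rfl, hZ'A⟩
  · exact hZ ▸ (length_le_LCS hZX hZA).trans (Nat.le_succ _)
  · exact hZ ▸ Nat.succ_le_succ (length_le_LCS (List.sublist_of_cons_sublist hZX) hZ'A)

lemma LCS_add_one_le_of_cons_sublist {X Y A : List α} {σ : α} (h : (σ :: Y).Sublist X) :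
    LCS Y A + 1 ≤ LCS X (σ :: A) := by
  obtain ⟨W, hW, hWY, hWA⟩ := exists_sublist_length_eq_LCS Y A
  exact hW ▸ length_le_LCS ((hWY.cons_cons σ).trans h) (hWA.cons_cons σ)

lemma exists_cons_sublist_of_LCS_lt {X A : List α} {σ : α} (h : LCS X A < LCS X (σ :: A)) :
    ∃ Z, (σ :: Z).Sublist X ∧ Z.Sublist A ∧ LCS X A ≤ Z.length := by
  obtain ⟨Z, hZ, hZX, hZA⟩ := exists_sublist_length_eq_LCS X (σ :: A)
  rcases List.sublist_cons_iff.mp hZA with hZA | ⟨Z', rfl, hZ'A⟩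
  · exact absurd (length_le_LCS hZX hZA) (by omega)
  · exact ⟨Z', hZX, hZ'A, by simp only [List.length_cons] at hZ; omega⟩

end LCS

lemma List.exists_getElem?_eq_and_sublist_drop {a : α} {l X : List α}
    (h : (a :: l).Sublist X) : ∃ k, X[k]? = some a ∧ l.Sublist (X.drop (k + 1)) := by
  obtain ⟨r₁, r₂, rfl, ha, hl⟩ := List.cons_sublist_iff.mp h
  obtain ⟨s, t, rfl⟩ := List.append_of_mem ha
  refine ⟨s.length, by simp, ?_⟩
  simpa using hl.trans (List.sublist_append_right t r₂)

lemma List.drop_eq_cons_of_getElem?_eq {a : α} {l : List α} {k : ℕ} (h : l[k]? = some a) :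
    l.drop k = a :: l.drop (k + 1) := by
  obtain ⟨hk, rfl⟩ := List.getElem?_eq_some_iff.mp h
  exact List.drop_eq_getElem_cons hk

section Substr

lemma substr_drop (B : List α) {i p : ℕ} (j : ℕ) (h : i ≤ p) :
    substr B p j = (substr B i j).drop (p - i) := by
  rw [substr, substr, List.drop_drop]
  congr 1
  omega

lemma substr_sublist_substr (B : List α) {i p : ℕ} (j : ℕ) (h : i ≤ p) :
    (substr B p j).Sublist (substr B i j) :=
  substr_drop B j h ▸ List.drop_sublist _ _

lemma getElem?_substr (B : List α) (i j k : ℕ) :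
    (substr B i j)[k]? = if i + k < j then B[i + k]? else none := by
  rw [substr, List.getElem?_drop, List.getElem?_take]

lemma cons_sublist_substr {B : List α} {σ : α} {i p j : ℕ} (hip : i < p) (hpj : p ≤ j)
    (hσ : B[p - 1]? = some σ) : (σ :: substr B p j).Sublist (substr B i j) := by
  have hcons : substr B (p - 1) j = σ :: substr B p j := by
    rw [substr, List.drop_eq_cons_of_getElem?_eq (by rwa [List.getElem?_take, if_pos (by omega)]),
      Nat.sub_add_cancel (by omega), substr]
  exact hcons ▸ substr_sublist_substr B j (by omega)

end Substr

lemma sub_antitone_of_density_nonneg {D : ℕ → ℕ → ℤ} {n : ℕ}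
    (hD : ∀ r, 1 ≤ r → r ≤ n → ∀ c, 1 ≤ c → c ≤ n → 0 ≤ density D r c)
    {i p j j' : ℕ} (hip : i ≤ p) (hpn : p ≤ n) (hjj' : j ≤ j') (hj'n : j' ≤ n) :
    D i j' - D p j' ≤ D i j - D p j := by
  have hcol : ∀ c < n, ∀ q, i ≤ q → q ≤ n → D i (c + 1) - D q (c + 1) ≤ D i c - D q c := by
    intro c hc q hiq
    induction q, hiq using Nat.le_induction with
    | base => intro; omega
    | succ q _ ih =>
      intro hqn
      have hdens := hD (q + 1) (by omega) hqn (c + 1) (by omega) (by omega)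
      simp only [density, Nat.add_sub_cancel] at hdens
      linarith [ih (by omega)]
  induction j', hjj' using Nat.le_induction with
  | base => exact le_rfl
  | succ c _ ih => exact (hcol c (by omega) p hip hpn).trans (ih (by omega))

section AllScores

lemma Kmat_of_le (A B : List α) {i j : ℕ} (h : i ≤ j) : Kmat A B i j = LCS (substr B i j) A :=
  if_pos h

variable {A B : List α} {σ : α} {i j : ℕ}

lemma Kmat_antitone_left {p : ℕ} (hip : i ≤ p) (hpj : p ≤ j) : Kmat A B p j ≤ Kmat A B i j := by
  rw [Kmat_of_le A B hpj, Kmat_of_le A B (hip.trans hpj)]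
  exact_mod_cast LCS_mono (substr_sublist_substr B j hip) (List.Sublist.refl A)

lemma Kmat_cons_le (h : i ≤ j) : Kmat (σ :: A) B i j ≤ Kmat A B i j + 1 := by
  rw [Kmat_of_le _ _ h, Kmat_of_le _ _ h]
  exact_mod_cast LCS_cons_le _ A σ

lemma Kmat_add_one_le_Kmat_cons {p : ℕ} (hip : i < p) (hpj : p ≤ j) (hσ : B[p - 1]? = some σ) :
    Kmat A B p j + 1 ≤ Kmat (σ :: A) B i j := by
  rw [Kmat_of_le _ _ hpj, Kmat_of_le _ _ (hip.le.trans hpj)]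
  exact_mod_cast LCS_add_one_le_of_cons_sublist (cons_sublist_substr hip hpj hσ)

lemma exists_match_of_Kmat_lt_Kmat_cons (hij : i ≤ j) (h : Kmat A B i j < Kmat (σ :: A) B i j) :
    ∃ p, i < p ∧ p ≤ j ∧ B[p - 1]? = some σ ∧ Kmat A B i j ≤ Kmat A B p j := by
  rw [Kmat_of_le _ _ hij, Kmat_of_le _ _ hij] at h
  obtain ⟨Z, hZX, hZA, hZ⟩ := exists_cons_sublist_of_LCS_lt (by exact_mod_cast h)
  obtain ⟨k, hk, hZdrop⟩ := List.exists_getElem?_eq_and_sublist_drop hZX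
  rw [getElem?_substr] at hk
  split_ifs at hk with hkj
  refine ⟨i + k + 1, by omega, hkj, by simpa using hk, ?_⟩
  rw [Kmat_of_le _ _ hij, Kmat_of_le _ _ hkj, substr_drop B j (by omega : i ≤ i + k + 1),
    show i + k + 1 - i = k + 1 by omega]
  exact_mod_cast hZ.trans (length_le_LCS hZdrop hZA)

end AllScores

theorem stmt_7_general {α : Type*} (A B : List α) (n : ℕ) (σ : α)
    (hVal : ∀ i, 1 ≤ i → i ≤ n → ∀ j, 1 ≤ j → j ≤ n →
      density (Kmat A B) i j ≠ 0 → density (Kmat A B) i j = 1) :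
    ∀ i j : ℕ, i ≤ j → j ≤ n →
      Kmat (σ :: A) B i j - Kmat A B i j = 1 →
      ∀ j', j ≤ j' → j' ≤ n → Kmat (σ :: A) B i j' - Kmat A B i j' = 1 := by
  have hdens : ∀ r, 1 ≤ r → r ≤ n → ∀ c, 1 ≤ c → c ≤ n → 0 ≤ density (Kmat A B) r c := by
    intro r hr1 hr2 c hc1 hc2
    by_cases h : density (Kmat A B) r c = 0
    · exact h.ge
    · exact (hVal r hr1 hr2 c hc1 hc2 h).symm ▸ zero_le_one
  intro i j hij hjn hdiff j' hjj' hj'n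
  obtain ⟨p, hip, hpj, hσ, hKpj⟩ :=
    exists_match_of_Kmat_lt_Kmat_cons (A := A) (B := B) (σ := σ) hij (by omega)
  have hrows := sub_antitone_of_density_nonneg hdens hip.le (hpj.trans hjn) hjj' hj'n
  have hKpj' := Kmat_antitone_left (A := A) (B := B) hip.le (hpj.trans hjj')
  have hlower := Kmat_add_one_le_Kmat_cons (A := A) hip (hpj.trans hjj') hσ
  have hupper := Kmat_cons_le (A := A) (B := B) (σ := σ) (hij.trans hjj')
  omega

/-- if Diff[i,j] = 1 then Diff[i,j'] = 1 for all j ≤ j' ≤ n. -/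
theorem stmt_7 {α : Type*} (A B : List α) (m n : ℕ)
    (hA : A.length = m) (hB : B.length = n) (σ : α)
    (hRow : ∀ i, 1 ≤ i → i ≤ n → ∀ j₁ j₂, 1 ≤ j₁ → j₁ ≤ n → 1 ≤ j₂ → j₂ ≤ n →
      density (Kmat A B) i j₁ ≠ 0 → density (Kmat A B) i j₂ ≠ 0 → j₁ = j₂)
    (hVal : ∀ i, 1 ≤ i → i ≤ n → ∀ j, 1 ≤ j → j ≤ n →
      density (Kmat A B) i j ≠ 0 → density (Kmat A B) i j = 1) :
    ∀ i j : ℕ, i ≤ j → j ≤ n →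
      Kmat (σ :: A) B i j - Kmat A B i j = 1 →
      ∀ j', j ≤ j' → j' ≤ n → Kmat (σ :: A) B i j' - Kmat A B i j' = 1 :=
  stmt_7_general A B n σ hVal
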